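/- Let b = (b_i)_{i∈ℤ} be a biinfinite sequence with every b_i ∈ {0,1}. If both constant sequences 𝟎 and 𝟏 belong to X_b, the closure of the shift orbit of b, then W(A_b) = conv(W(A_𝟎) ∪ W(A_𝟏)). -/

import Mathlib

/-!
Writing `aⱼ = conj xⱼ · xⱼ₊₁`, one has `⟪x, A_c x⟫ = ∑ aⱼ + ∑ cⱼ conj aⱼ`, and `∑ |aⱼ| < 1`
for a unit vector `x`, because a nonzero square-summable sequence cannot satisfy
`|xⱼ| = |xⱼ₊₁|` for all `j`. Hence `W(A_𝟎)` is the open unit disc and `W(A_𝟏) = (-2, 2)`.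
For `{0,1}`-valued `b`, splitting `∑ aⱼ = U + V` along `{b = 0}` and `{b = 1}` gives
`⟪x, A_b x⟫ = U + 2 Re V` with `‖U‖ + ‖V‖ < 1`, a convex combination of a point of the disc
and a point of `(-2, 2)`.

Conversely, `𝟎, 𝟏 ∈ X_b` means that `b` has arbitrarily long runs of `0`s and of `1`s.
Normalised geometric vectors `(ω t)ᵏ` placed on such runs attain every point of the disc,
resp. of `(-2, 2)` (intermediate value theorem in `t`), and two such vectors on runs of
different values are orthogonal and not coupled by `A_b`, so `√p u + √q v` attains
`p z₀ + q r`.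
-/

open scoped ComplexConjugate ENNReal
open Filter

noncomputable section

/-- `ℓ²(ℤ)`, the Hilbert space of square-summable biinfinite complex sequences. -/
abbrev Hseq : Type := lp (fun _ : ℤ => ℂ) 2

/-- `A` is the (bounded) tridiagonal operator `A_b` associated to the biinfinite
sequence `b`, i.e. `(A x) j = x (j+1) + b (j-1) * x (j-1)`. -/
def IsTridiag (b : ℤ → ℂ) (A : Hseq →L[ℂ] Hseq) : Prop :=
  ∀ x : Hseq, ∀ j : ℤ,
    (A x : ℤ → ℂ) j = (x : ℤ → ℂ) (j + 1) + b (j - 1) * (x : ℤ → ℂ) (j - 1)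

/-- The numerical range `W(A) = {⟨Ax, x⟩ : ‖x‖ = 1}`, where
`⟨u, v⟩ = ∑ₖ uₖ · conj(vₖ)`; in Mathlib's convention this is `⟪x, A x⟫_ℂ`. -/
def numRange (A : Hseq →L[ℂ] Hseq) : Set ℂ :=
  {z | ∃ x : Hseq, ‖x‖ = 1 ∧ (inner (𝕜 := ℂ) x (A x) : ℂ) = z}

/-- The shift orbit `Orb(b) = {φⁿ(b) : n ∈ ℤ}` where `(φⁿ(b))ᵢ = b_{i+n}`. -/
def shiftOrbit (b : ℤ → ℂ) : Set (ℤ → ℂ) :=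
  {c | ∃ n : ℤ, c = fun i => b (i + n)}

open scoped InnerProductSpace
open Set Metric

lemma summable_mul_succ_of_summable_sq {a : ℤ → ℝ} (ha : Summable fun j => a j ^ 2) :
    Summable fun j => a j * a (j + 1) := by
  have ha' : Summable fun j => a (j + 1) ^ 2 := ha.comp_injective (add_left_injective 1)
  refine Summable.of_norm_bounded ((ha.add ha').div_const 2) fun j => ?_
  rw [Real.norm_eq_abs, abs_mul]
  nlinarith [sq_nonneg (|a j| - |a (j + 1)|), sq_abs (a j), sq_abs (a (j + 1))]

lemma tsum_mul_succ_lt_tsum_sq {a : ℤ → ℝ} (ha : Summable fun j => a j ^ 2) (h0 : a ≠ 0) :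
    ∑' j, a j * a (j + 1) < ∑' j, a j ^ 2 := by
  have ha' : Summable fun j => a (j + 1) ^ 2 := ha.comp_injective (add_left_injective 1)
  have hshift : ∑' j, a (j + 1) ^ 2 = ∑' j, a j ^ 2 :=
    (Equiv.addRight (1 : ℤ)).tsum_eq fun j => a j ^ 2
  have hprod := summable_mul_succ_of_summable_sq ha
  have hdiff :
      ∑' j, (a j - a (j + 1)) ^ 2 = 2 * ∑' j, a j ^ 2 - 2 * ∑' j, a j * a (j + 1) := by
    have := (ha.add ha').tsum_sub (hprod.mul_left 2)
    rw [ha.tsum_add ha', tsum_mul_left, hshift] at this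
    rw [two_mul, ← this]
    exact tsum_congr fun j => by ring
  have hnonconst : ∃ j, a j ≠ a (j + 1) := by
    by_contra! hconst
    have h : ∀ j, a j = a 0 := fun j => by
      induction j using Int.induction_on with
      | zero => rfl
      | succ n ih => rw [← hconst, ih]
      | pred n ih => rw [hconst, sub_add_cancel, ih]
    refine h0 (funext fun j => ?_)
    rw [h j, Pi.zero_apply, ← sq_eq_zero_iff]
    exact (summable_const_iff _).mp (by simpa only [h] using ha)
  obtain ⟨j, hj⟩ := hnonconst
  have hj' : a j - a (j + 1) ≠ 0 := sub_ne_zero.mpr hj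
  have hdiff_sum : Summable fun j => (a j - a (j + 1)) ^ 2 := by
    refine ((ha.add ha').sub (hprod.mul_left 2)).congr fun j => ?_
    ring
  have : 0 < ∑' j, (a j - a (j + 1)) ^ 2 :=
    hdiff_sum.tsum_pos (fun _ => sq_nonneg _) j (by positivity)
  linarith

lemma lp.hasSum_norm_sq {ι : Type*} {E : ι → Type*} [∀ i, NormedAddCommGroup (E i)]
    (x : lp E 2) : HasSum (fun i => ‖x i‖ ^ 2) (‖x‖ ^ 2) := by
  simpa only [ENNReal.toReal_ofNat, Real.rpow_two] using lp.hasSum_norm (p := 2) (by norm_num) x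

lemma lp.inner_eq_zero_of_forall {𝕜 ι : Type*} [RCLike 𝕜] {G : ι → Type*}
    [∀ i, NormedAddCommGroup (G i)] [∀ i, InnerProductSpace 𝕜 (G i)] {u v : lp G 2}
    (h : ∀ i, u i = 0 ∨ v i = 0) : ⟪u, v⟫_𝕜 = 0 := by
  rw [lp.inner_eq_tsum]
  refine (tsum_congr fun i => ?_).trans tsum_zero
  rcases h i with h | h <;> simp [h]

def overlap (x : Hseq) (j : ℤ) : ℂ := conj (x j) * x (j + 1)

lemma norm_overlap (x : Hseq) (j : ℤ) : ‖overlap x j‖ = ‖x j‖ * ‖x (j + 1)‖ := by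
  rw [overlap, norm_mul, RCLike.norm_conj]

lemma summable_norm_overlap (x : Hseq) : Summable fun j => ‖overlap x j‖ := by
  simpa only [norm_overlap] using summable_mul_succ_of_summable_sq (lp.hasSum_norm_sq x).summable

lemma tsum_norm_overlap_lt_one {x : Hseq} (hx : ‖x‖ = 1) : ∑' j, ‖overlap x j‖ < 1 := by
  have hsq := lp.hasSum_norm_sq x
  rw [hx, one_pow] at hsq
  have hne : (fun j => ‖x j‖) ≠ 0 := fun h0 =>
    one_ne_zero (hsq.unique (by simp [congrFun h0]))
  simpa only [norm_overlap, hsq.tsum_eq] using tsum_mul_succ_lt_tsum_sq hsq.summable hne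

lemma IsTridiag.inner_self_eq {c : ℤ → ℂ} {A : Hseq →L[ℂ] Hseq} (hA : IsTridiag c A)
    (x : Hseq) : ⟪x, A x⟫_ℂ = ∑' j, overlap x j + ∑' j, c j * conj (overlap x j) := by
  have hpt : ∀ j, ⟪x j, A x j⟫_ℂ = overlap x j + c (j - 1) * conj (overlap x (j - 1)) := by
    intro j
    rw [RCLike.inner_apply, hA x j, overlap, overlap, sub_add_cancel, map_mul, Complex.conj_conj]
    ring
  have hsum : HasSum (fun j => c (j - 1) * conj (overlap x (j - 1)))
      (⟪x, A x⟫_ℂ - ∑' j, overlap x j) := by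
    have hinner : HasSum (fun j => ⟪x j, A x j⟫_ℂ) ⟪x, A x⟫_ℂ := lp.hasSum_inner x (A x)
    have hfun : (fun j => c (j - 1) * conj (overlap x (j - 1)))
        = fun j => ⟪x j, A x j⟫_ℂ - overlap x j :=
      funext fun j => by rw [hpt, add_sub_cancel_left]
    rw [hfun]
    exact hinner.sub (summable_norm_overlap x).of_norm.hasSum
  have hreindex : ∑' j, c j * conj (overlap x j) = ∑' j, c (j - 1) * conj (overlap x (j - 1)) :=
    ((Equiv.subRight 1).tsum_eq fun j => c j * conj (overlap x j)).symm
  rw [hreindex, hsum.tsum_eq]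
  ring

lemma norm_tsum_overlap_lt_one {x : Hseq} (hx : ‖x‖ = 1) : ‖∑' j, overlap x j‖ < 1 :=
  (norm_tsum_le_tsum_norm (summable_norm_overlap x)).trans_lt (tsum_norm_overlap_lt_one hx)

lemma IsTridiag.numRange_subset_ball {A : Hseq →L[ℂ] Hseq} (hA : IsTridiag (fun _ => 0) A) :
    numRange A ⊆ ball 0 1 := by
  rintro _ ⟨x, hx, rfl⟩
  rw [mem_ball_zero_iff, hA.inner_self_eq]
  simpa only [zero_mul, tsum_zero, add_zero] using norm_tsum_overlap_lt_one hx

lemma IsTridiag.numRange_subset_Ioo {A : Hseq →L[ℂ] Hseq} (hA : IsTridiag (fun _ => 1) A) :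
    numRange A ⊆ Complex.ofReal '' Ioo (-2) 2 := by
  rintro _ ⟨x, hx, rfl⟩
  have hre := (Complex.abs_re_le_norm _).trans_lt (norm_tsum_overlap_lt_one hx)
  rw [abs_lt] at hre
  refine ⟨2 * (∑' j, overlap x j).re, ⟨by linarith, by linarith⟩, ?_⟩
  rw [hA.inner_self_eq]
  simp only [one_mul, ← Complex.conj_tsum, Complex.add_conj]

lemma add_add_conj_mem_convexHull {U V : ℂ} (h : ‖U‖ + ‖V‖ < 1) :
    U + (V + conj V) ∈ convexHull ℝ (ball (0 : ℂ) 1 ∪ Complex.ofReal '' Ioo (-2) 2) := by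
  set t : ℝ := (1 + ‖U‖ - ‖V‖) / 2 with htdef
  have hU : ‖U‖ < t := by linarith [norm_nonneg V]
  have hV : ‖V‖ < 1 - t := by linarith [norm_nonneg U]
  have ht : 0 < t := (norm_nonneg U).trans_lt hU
  have ht' : 0 < 1 - t := (norm_nonneg V).trans_lt hV
  have hz0 : U / t ∈ ball (0 : ℂ) 1 := by
    rw [mem_ball_zero_iff, norm_div, Complex.norm_real, Real.norm_of_nonneg ht.le,
      div_lt_one ht]
    exact hU
  have hz1 : 2 * V.re / (1 - t) ∈ Ioo (-2 : ℝ) 2 := by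
    have hre := (Complex.abs_re_le_norm V).trans_lt hV
    rw [abs_lt] at hre
    constructor
    · rw [lt_div_iff₀ ht']; linarith
    · rw [div_lt_iff₀ ht']; linarith
  have hcomb := convex_convexHull ℝ (ball (0 : ℂ) 1 ∪ Complex.ofReal '' Ioo (-2) 2)
    (subset_convexHull ℝ _ (Or.inl hz0)) (subset_convexHull ℝ _ (Or.inr ⟨_, hz1, rfl⟩))
    ht.le ht'.le (add_sub_cancel t 1)
  have hU_eq : (t : ℂ) * (U / t) = U := mul_div_cancel₀ U (Complex.ofReal_ne_zero.2 ht.ne')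
  have hV_eq : (1 - t) * (2 * V.re / (1 - t)) = 2 * V.re := mul_div_cancel₀ _ ht'.ne'
  rw [Complex.add_conj]
  rwa [Complex.real_smul, Complex.real_smul, hU_eq, ← Complex.ofReal_mul, hV_eq] at hcomb

lemma tsum_add_conj_tsum_indicator_mem_convexHull {ι : Type*} {a : ι → ℂ}
    (ha : Summable fun i => ‖a i‖) (ha₁ : ∑' i, ‖a i‖ < 1) (S : Set ι) :
    ∑' i, a i + conj (∑' i, S.indicator a i)
      ∈ convexHull ℝ (ball (0 : ℂ) 1 ∪ Complex.ofReal '' Ioo (-2) 2) := by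
  have hsplit : ∑' i, a i = ∑' i, Sᶜ.indicator a i + ∑' i, S.indicator a i := by
    rw [← (ha.of_norm.indicator Sᶜ).tsum_add (ha.of_norm.indicator S)]
    exact tsum_congr fun i => (congr_fun (Set.indicator_compl_add_self S a) i).symm
  have hnorm : ∀ T : Set ι, ‖∑' i, T.indicator a i‖ ≤ ∑' i, T.indicator (‖a ·‖) i := by
    intro T
    simp only [← norm_indicator_eq_indicator_norm]
    exact norm_tsum_le_tsum_norm ((ha.indicator T).congr fun i =>
      (norm_indicator_eq_indicator_norm a i).symm)
  have hsum :
      ∑' i, Sᶜ.indicator (‖a ·‖) i + ∑' i, S.indicator (‖a ·‖) i = ∑' i, ‖a i‖ := by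
    rw [← (ha.indicator Sᶜ).tsum_add (ha.indicator S)]
    exact tsum_congr fun i => congr_fun (Set.indicator_compl_add_self S (‖a ·‖)) i
  rw [hsplit, add_assoc]
  exact add_add_conj_mem_convexHull (by linarith [hnorm S, hnorm Sᶜ])

lemma IsTridiag.numRange_subset_convexHull {b : ℤ → ℂ} (hb : ∀ i, b i = 0 ∨ b i = 1)
    {A : Hseq →L[ℂ] Hseq} (hA : IsTridiag b A) :
    numRange A ⊆ convexHull ℝ (ball (0 : ℂ) 1 ∪ Complex.ofReal '' Ioo (-2) 2) := by
  rintro _ ⟨x, hx, rfl⟩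
  have hb_mul : ∀ j, b j * conj (overlap x j) = conj ({j | b j = 1}.indicator (overlap x) j) := by
    intro j
    rcases hb j with h | h <;> simp [h, Set.indicator]
  rw [hA.inner_self_eq, tsum_congr hb_mul, ← Complex.conj_tsum]
  exact tsum_add_conj_tsum_indicator_mem_convexHull (summable_norm_overlap x)
    (tsum_norm_overlap_lt_one hx) _

lemma tsum_eq_sum_range_of_ne_zero {α : Type*} [AddCommMonoid α] [TopologicalSpace α]
    {F : ℤ → α} {m : ℤ} {n : ℕ} (hF : ∀ i, F i ≠ 0 → i ∈ Icc m (m + n)) :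
    ∑' i, F i = ∑ j ∈ Finset.range (n + 1), F (m + j) := by
  let e : ℕ ↪ ℤ := ⟨fun j => m + j, fun _ _ h => by simpa using h⟩
  rw [tsum_eq_sum (s := (Finset.range (n + 1)).map e), Finset.sum_map]
  · rfl
  intro i hi
  by_contra h
  obtain ⟨h1, h2⟩ := hF i h
  refine hi (Finset.mem_map.2 ⟨(i - m).toNat, Finset.mem_range.2 (by omega), ?_⟩)
  show m + ((i - m).toNat : ℤ) = i
  omega

def geomBlock (m : ℤ) (n : ℕ) (w : ℂ) : Hseq :=
  ⟨fun i => if i ∈ Icc m (m + n) then w ^ (i - m).toNat else 0,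
    (memℓp_zero ((finite_Icc m (m + n)).subset fun _ hi => not_not.1 fun h => hi (if_neg h))
      ).of_exponent_ge zero_le⟩

lemma geomBlock_apply_add (m : ℤ) {n j : ℕ} (hj : j ≤ n) (w : ℂ) :
    geomBlock m n w (m + j) = w ^ j := by
  have h : m + (j : ℤ) ∈ Icc m (m + n) := ⟨by omega, by omega⟩
  show (if m + (j : ℤ) ∈ Icc m (m + n) then w ^ (m + (j : ℤ) - m).toNat else 0) = w ^ j
  rw [if_pos h, add_sub_cancel_left, Int.toNat_natCast]

lemma mem_Icc_of_geomBlock_ne_zero {m : ℤ} {n : ℕ} {w : ℂ} {i : ℤ}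
    (h : geomBlock m n w i ≠ 0) : i ∈ Icc m (m + n) :=
  not_not.1 fun hi => h (if_neg hi)

lemma norm_geomBlock_sq (m : ℤ) (n : ℕ) (w : ℂ) :
    ‖geomBlock m n w‖ ^ 2 = ∑ j ∈ Finset.range (n + 1), (‖w‖ ^ 2) ^ j := by
  rw [← (lp.hasSum_norm_sq _).tsum_eq, tsum_eq_sum_range_of_ne_zero (m := m) (n := n)]
  · refine Finset.sum_congr rfl fun j hj => ?_
    rw [geomBlock_apply_add m (Nat.lt_succ_iff.1 (Finset.mem_range.1 hj)), norm_pow, ← pow_mul,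
      ← pow_mul, mul_comm]
  · intro i hi
    exact mem_Icc_of_geomBlock_ne_zero (by simpa using hi)

lemma tsum_overlap_geomBlock (m : ℤ) (n : ℕ) (w : ℂ) :
    ∑' i, overlap (geomBlock m n w) i = w * ∑ j ∈ Finset.range n, ((‖w‖ ^ 2) ^ j : ℝ) := by
  rw [tsum_eq_sum_range_of_ne_zero (m := m) (n := n), Finset.sum_range_succ]
  · have hlast : overlap (geomBlock m n w) (m + n) = 0 := by
      refine mul_eq_zero_of_right _ (if_neg fun h => ?_)
      exact absurd h.2 (by omega)
    rw [hlast, add_zero, Complex.ofReal_sum, Finset.mul_sum]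
    refine Finset.sum_congr rfl fun j hj => ?_
    have hj : j < n := Finset.mem_range.1 hj
    have hsucc : m + (j : ℤ) + 1 = m + ((j + 1 : ℕ) : ℤ) := by push_cast; ring
    rw [overlap, hsucc, geomBlock_apply_add m hj.le, geomBlock_apply_add m hj, map_pow, pow_succ,
      ← mul_assoc, ← mul_pow, Complex.conj_mul']
    push_cast
    ring
  · intro i hi
    exact mem_Icc_of_geomBlock_ne_zero fun h => hi (by rw [overlap, h, map_zero, zero_mul])

lemma IsTridiag.inner_geomBlock {c : ℤ → ℂ} {A : Hseq →L[ℂ] Hseq} (hA : IsTridiag c A)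
    {γ : ℂ} {m : ℤ} {n : ℕ} (hc : ∀ j < n, c (m + j) = γ) (w : ℂ) :
    ⟪geomBlock m n w, A (geomBlock m n w)⟫_ℂ
      = (w + γ * conj w) * ∑ j ∈ Finset.range n, ((‖w‖ ^ 2) ^ j : ℝ) := by
  set f := geomBlock m n w
  have hc' : ∀ i, c i * conj (overlap f i) = γ * conj (overlap f i) := by
    intro i
    by_cases hi : overlap f i = 0
    · simp [hi]
    have hi₀ : i ∈ Icc m (m + n) :=
      mem_Icc_of_geomBlock_ne_zero fun h => hi (by rw [overlap, h, map_zero, zero_mul])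
    have hi₁ : i + 1 ∈ Icc m (m + n) :=
      mem_Icc_of_geomBlock_ne_zero fun h => hi (by rw [overlap, h, mul_zero])
    rw [mem_Icc] at hi₀ hi₁
    obtain ⟨j, rfl⟩ : ∃ j : ℕ, i = m + j := ⟨(i - m).toNat, by omega⟩
    rw [hc j (by omega)]
  rw [hA.inner_self_eq, tsum_congr hc', tsum_mul_left, ← Complex.conj_tsum,
    tsum_overlap_geomBlock, map_mul, Complex.conj_ofReal]
  ring

lemma inner_inv_norm_smul_map_self {𝕜 E : Type*} [RCLike 𝕜] [NormedAddCommGroup E]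
    [InnerProductSpace 𝕜 E] (A : E →L[𝕜] E) (x : E) :
    ⟪(‖x‖⁻¹ : 𝕜) • x, A ((‖x‖⁻¹ : 𝕜) • x)⟫_𝕜 = ⟪x, A x⟫_𝕜 / (‖x‖ ^ 2 : ℝ) := by
  rw [map_smul, inner_smul_left, inner_smul_right, map_inv₀, RCLike.conj_ofReal, ← mul_assoc,
    ← mul_inv, ← sq, RCLike.ofReal_pow, div_eq_inv_mul]

-- The Rayleigh quotient of the shift at the vector `(1, t, t², …, tⁿ)`.
def blockRatio (n : ℕ) (t : ℝ) : ℝ :=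
  t * (∑ j ∈ Finset.range n, (t ^ 2) ^ j) / ∑ j ∈ Finset.range (n + 1), (t ^ 2) ^ j

lemma IsTridiag.exists_inner_eq_blockRatio {c : ℤ → ℂ} {A : Hseq →L[ℂ] Hseq}
    (hA : IsTridiag c A) {γ : ℂ} {m : ℤ} {n : ℕ} (hc : ∀ j < n, c (m + j) = γ) {ω : ℂ}
    (hω : ‖ω‖ = 1) (t : ℝ) :
    ∃ x : Hseq, ‖x‖ = 1 ∧ (∀ i, x i ≠ 0 → i ∈ Icc m (m + n)) ∧
      ⟪x, A x⟫_ℂ = (ω + γ * conj ω) * blockRatio n t := by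
  set f := geomBlock m n (ω * t)
  have hf : f ≠ 0 := fun h => by
    simpa [f, h] using geomBlock_apply_add m (Nat.zero_le n) (ω * t)
  refine ⟨(‖f‖⁻¹ : ℂ) • f, norm_smul_inv_norm hf, fun i hi => ?_,
    (inner_inv_norm_smul_map_self A f).trans ?_⟩
  · exact mem_Icc_of_geomBlock_ne_zero (right_ne_zero_of_mul hi)
  have hnorm : ‖ω * t‖ ^ 2 = t ^ 2 := by
    rw [norm_mul, hω, one_mul, Complex.norm_real, Real.norm_eq_abs, sq_abs]
  show _ / ((‖f‖ ^ 2 : ℝ) : ℂ) = _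
  rw [hA.inner_geomBlock hc, norm_geomBlock_sq, hnorm, blockRatio, map_mul,
    Complex.conj_ofReal]
  push_cast
  ring

lemma continuous_blockRatio (n : ℕ) : Continuous (blockRatio n) := by
  refine Continuous.div (by fun_prop) (by fun_prop) fun t => ?_
  rw [Finset.sum_range_succ']
  positivity

lemma blockRatio_of_sq_eq_one (n : ℕ) {ε : ℝ} (hε : ε ^ 2 = 1) :
    blockRatio n ε = ε * n / (n + 1) := by
  simp [blockRatio, hε]

lemma exists_blockRatio_eq {s : ℝ} (hs : |s| < 1) : ∃ n t, blockRatio n t = s := by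
  obtain ⟨n, hn⟩ := exists_nat_gt (|s| / (1 - |s|))
  have hn' : |s| < n / (n + 1) := by
    rw [div_lt_iff₀ (by linarith)] at hn
    rw [lt_div_iff₀ (by positivity)]
    linarith
  have hIcc : s ∈ Icc (blockRatio n (-1)) (blockRatio n 1) := by
    rw [blockRatio_of_sq_eq_one n (by norm_num), blockRatio_of_sq_eq_one n (by norm_num)]
    rw [neg_one_mul, neg_div, one_mul]
    exact ⟨by linarith [neg_abs_le s], by linarith [le_abs_self s]⟩
  obtain ⟨t, -, ht⟩ :=
    intermediate_value_Icc (by norm_num) (continuous_blockRatio n).continuousOn hIcc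
  exact ⟨n, t, ht⟩

def IsSupportedInRun (c : ℤ → ℂ) (γ : ℂ) (x : Hseq) : Prop :=
  ∀ i, x i ≠ 0 → c (i - 1) = γ ∧ c i = γ ∧ c (i + 1) = γ

lemma IsSupportedInRun.inner_eq_zero {c : ℤ → ℂ} {γ δ : ℂ} {u v : Hseq}
    (hu : IsSupportedInRun c γ u) (hv : IsSupportedInRun c δ v) (hγδ : γ ≠ δ) :
    ⟪u, v⟫_ℂ = 0 :=
  lp.inner_eq_zero_of_forall fun i => or_iff_not_imp_left.2 fun hui =>
    not_not.1 fun hvi => hγδ ((hu i hui).2.1.symm.trans (hv i hvi).2.1)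

lemma IsTridiag.inner_eq_zero_of_isSupportedInRun {c : ℤ → ℂ} {A : Hseq →L[ℂ] Hseq}
    (hA : IsTridiag c A) {γ δ : ℂ} {u v : Hseq} (hu : IsSupportedInRun c γ u)
    (hv : IsSupportedInRun c δ v) (hγδ : γ ≠ δ) : ⟪u, A v⟫_ℂ = 0 := by
  refine lp.inner_eq_zero_of_forall fun i => or_iff_not_imp_left.2 fun hui => ?_
  have hci := (hu i hui).2.1
  have hnext : v (i + 1) = 0 :=
    not_not.1 fun h => hγδ (hci.symm.trans (by simpa using (hv _ h).1))
  have hprev : v (i - 1) = 0 :=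
    not_not.1 fun h => hγδ (hci.symm.trans (by simpa using (hv _ h).2.2))
  rw [hA v i, hnext, hprev, mul_zero, add_zero]

lemma exists_norm_eq_one_inner_map_self_eq_add {E : Type*} [NormedAddCommGroup E]
    [InnerProductSpace ℂ E] (A : E →L[ℂ] E) {u v : E} (hu : ‖u‖ = 1) (hv : ‖v‖ = 1)
    (huv : ⟪u, v⟫_ℂ = 0) (huAv : ⟪u, A v⟫_ℂ = 0) (hvAu : ⟪v, A u⟫_ℂ = 0) {p q : ℝ}
    (hp : 0 ≤ p) (hq : 0 ≤ q) (hpq : p + q = 1) :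
    ∃ x : E, ‖x‖ = 1 ∧ ⟪x, A x⟫_ℂ = p • ⟪u, A u⟫_ℂ + q • ⟪v, A v⟫_ℂ := by
  refine ⟨(√p : ℂ) • u + (√q : ℂ) • v, ?_, ?_⟩
  · have horth : ⟪(√p : ℂ) • u, (√q : ℂ) • v⟫_ℂ = 0 := by
      rw [inner_smul_left, inner_smul_right, huv, mul_zero, mul_zero]
    rw [← pow_eq_one_iff_of_nonneg (norm_nonneg _) two_ne_zero, sq,
      norm_add_sq_eq_norm_sq_add_norm_sq_of_inner_eq_zero _ _ horth, norm_smul, norm_smul,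
      hu, hv, Complex.norm_real, Complex.norm_real, Real.norm_of_nonneg (Real.sqrt_nonneg _),
      Real.norm_of_nonneg (Real.sqrt_nonneg _), mul_one, mul_one, Real.mul_self_sqrt hp,
      Real.mul_self_sqrt hq, hpq]
  · simp only [map_add, map_smul, inner_add_left, inner_add_right, inner_smul_left,
      inner_smul_right, huAv, hvAu, Complex.conj_ofReal, Complex.real_smul]
    have hp' : (√p : ℂ) * √p = p := by rw [← Complex.ofReal_mul, Real.mul_self_sqrt hp]
    have hq' : (√q : ℂ) * √q = q := by rw [← Complex.ofReal_mul, Real.mul_self_sqrt hq]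
    linear_combination ⟪u, A u⟫_ℂ * hp' + ⟪v, A v⟫_ℂ * hq'

def HasArbitrarilyLongRuns (c : ℤ → ℂ) (γ : ℂ) : Prop :=
  ∀ N : ℕ, ∃ m : ℤ, ∀ j ≤ N, c (m + j) = γ

lemma IsTridiag.exists_isSupportedInRun_inner_eq {c : ℤ → ℂ} {A : Hseq →L[ℂ] Hseq}
    (hA : IsTridiag c A) {γ : ℂ} (hruns : HasArbitrarilyLongRuns c γ) {s : ℝ}
    (hs : |s| < 1) {ω : ℂ} (hω : ‖ω‖ = 1) :
    ∃ x : Hseq, ‖x‖ = 1 ∧ IsSupportedInRun c γ x ∧ ⟪x, A x⟫_ℂ = (ω + γ * conj ω) * s := by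
  obtain ⟨n, t, rfl⟩ := exists_blockRatio_eq hs
  obtain ⟨m, hm⟩ := hruns (n + 2)
  have hc : ∀ k, m ≤ k → k ≤ m + n + 2 → c k = γ := fun k h₁ h₂ => by
    obtain ⟨j, rfl⟩ : ∃ j : ℕ, k = m + j := ⟨(k - m).toNat, by omega⟩
    exact hm j (by omega)
  obtain ⟨x, hx, hsupp, hval⟩ := hA.exists_inner_eq_blockRatio (m := m + 1) (n := n)
    (fun j hj => hc _ (by omega) (by omega)) hω t
  refine ⟨x, hx, fun i hi => ?_, hval⟩
  obtain ⟨h₁, h₂⟩ := hsupp i hi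
  exact ⟨hc _ (by omega) (by omega), hc _ (by omega) (by omega), hc _ (by omega) (by omega)⟩

lemma IsTridiag.exists_isSupportedInRun_inner_eq_of_mem_ball {c : ℤ → ℂ}
    {A : Hseq →L[ℂ] Hseq} (hA : IsTridiag c A) (hruns : HasArbitrarilyLongRuns c 0)
    {z : ℂ} (hz : z ∈ ball (0 : ℂ) 1) :
    ∃ x : Hseq, ‖x‖ = 1 ∧ IsSupportedInRun c 0 x ∧ ⟪x, A x⟫_ℂ = z := by
  rw [mem_ball_zero_iff, ← abs_norm] at hz
  obtain ⟨x, hx, hsupp, hval⟩ := hA.exists_isSupportedInRun_inner_eq hruns hz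
    (Complex.norm_exp_ofReal_mul_I z.arg)
  refine ⟨x, hx, hsupp, ?_⟩
  rw [hval, zero_mul, add_zero, mul_comm, Complex.norm_mul_exp_arg_mul_I]

lemma IsTridiag.exists_isSupportedInRun_inner_eq_of_mem_Ioo {c : ℤ → ℂ}
    {A : Hseq →L[ℂ] Hseq} (hA : IsTridiag c A) (hruns : HasArbitrarilyLongRuns c 1)
    {r : ℝ} (hr : r ∈ Ioo (-2) 2) :
    ∃ x : Hseq, ‖x‖ = 1 ∧ IsSupportedInRun c 1 x ∧ ⟪x, A x⟫_ℂ = r := by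
  have hs : |r / 2| < 1 := by rw [abs_lt]; constructor <;> linarith [hr.1, hr.2]
  obtain ⟨x, hx, hsupp, hval⟩ := hA.exists_isSupportedInRun_inner_eq hruns hs norm_one
  refine ⟨x, hx, hsupp, ?_⟩
  rw [hval, map_one, one_mul]
  push_cast
  ring

lemma IsTridiag.numRange_eq_ball {A : Hseq →L[ℂ] Hseq} (hA : IsTridiag (fun _ => 0) A) :
    numRange A = ball 0 1 := by
  refine hA.numRange_subset_ball.antisymm fun z hz => ?_
  obtain ⟨x, hx, -, hval⟩ :=
    hA.exists_isSupportedInRun_inner_eq_of_mem_ball (fun _ => ⟨0, fun _ _ => rfl⟩) hz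
  exact ⟨x, hx, hval⟩

lemma IsTridiag.numRange_eq_Ioo {A : Hseq →L[ℂ] Hseq} (hA : IsTridiag (fun _ => 1) A) :
    numRange A = Complex.ofReal '' Ioo (-2) 2 := by
  refine hA.numRange_subset_Ioo.antisymm ?_
  rintro _ ⟨r, hr, rfl⟩
  obtain ⟨x, hx, -, hval⟩ :=
    hA.exists_isSupportedInRun_inner_eq_of_mem_Ioo (fun _ => ⟨0, fun _ _ => rfl⟩) hr
  exact ⟨x, hx, hval⟩

lemma IsTridiag.convexHull_subset_numRange {c : ℤ → ℂ} {A : Hseq →L[ℂ] Hseq}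
    (hA : IsTridiag c A) (hruns₀ : HasArbitrarilyLongRuns c 0)
    (hruns₁ : HasArbitrarilyLongRuns c 1) :
    convexHull ℝ (ball (0 : ℂ) 1 ∪ Complex.ofReal '' Ioo (-2) 2) ⊆ numRange A := by
  have hconv : Convex ℝ (Complex.ofReal '' Ioo (-2 : ℝ) 2) :=
    (convex_Ioo _ _).linear_image Complex.ofRealLI.toLinearMap
  rw [(convex_ball 0 1).convexHull_union hconv ⟨0, mem_ball_self one_pos⟩
    ⟨0, 0, by norm_num, Complex.ofReal_zero⟩]
  intro w hw
  obtain ⟨z, hz, _, ⟨r, hr, rfl⟩, p, q, hp, hq, hpq, rfl⟩ := mem_convexJoin.1 hw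
  obtain ⟨u, hu, hsu, rfl⟩ := hA.exists_isSupportedInRun_inner_eq_of_mem_ball hruns₀ hz
  obtain ⟨v, hv, hsv, hval⟩ := hA.exists_isSupportedInRun_inner_eq_of_mem_Ioo hruns₁ hr
  rw [← hval]
  exact exists_norm_eq_one_inner_map_self_eq_add A hu hv (hsu.inner_eq_zero hsv zero_ne_one)
    (hA.inner_eq_zero_of_isSupportedInRun hsu hsv zero_ne_one)
    (hA.inner_eq_zero_of_isSupportedInRun hsv hsu one_ne_zero) hp hq hpq

lemma hasArbitrarilyLongRuns_of_const_mem_closure {b : ℤ → ℂ} {γ : ℂ}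
    (hb : ∀ i, b i = γ ∨ 1 ≤ dist (b i) γ) (hγ : (fun _ => γ) ∈ closure (shiftOrbit b)) :
    HasArbitrarilyLongRuns b γ := by
  intro N
  let U : Set (ℤ → ℂ) := ⋂ j ∈ Finset.range (N + 1), (fun c => c j) ⁻¹' ball γ 1
  have hU : IsOpen U :=
    isOpen_biInter_finset fun j _ => isOpen_ball.preimage (continuous_apply (j : ℤ))
  obtain ⟨_, hcU, n, rfl⟩ := mem_closure_iff.1 hγ U hU (by simp [U])
  refine ⟨n, fun j hj => ?_⟩
  have hj : dist (b (j + n)) γ < 1 := mem_iInter₂.1 hcU j (Finset.mem_range.2 (by omega))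
  rw [add_comm]
  exact (hb _).resolve_right (not_le.2 hj)

/-- If both constant sequences `𝟎` and `𝟏` belong to `X_b`, the closure of the shift
orbit of the `{0,1}`-valued sequence `b`, then `W(A_b) = conv(W(A_𝟎) ∪ W(A_𝟏))`. -/
theorem stmt7 (b : ℤ → ℂ) (hb : ∀ i, b i = 0 ∨ b i = 1)
    (Ab : Hseq →L[ℂ] Hseq) (hAb : IsTridiag b Ab)
    (A0 : Hseq →L[ℂ] Hseq) (hA0 : IsTridiag (fun _ => (0 : ℂ)) A0)
    (A1 : Hseq →L[ℂ] Hseq) (hA1 : IsTridiag (fun _ => (1 : ℂ)) A1)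
    (h0 : (fun _ : ℤ => (0 : ℂ)) ∈ closure (shiftOrbit b))
    (h1 : (fun _ : ℤ => (1 : ℂ)) ∈ closure (shiftOrbit b)) :
    numRange Ab = convexHull ℝ (numRange A0 ∪ numRange A1) := by
  have hsep : ∀ γ : ℂ, (γ = 0 ∨ γ = 1) → ∀ i, b i = γ ∨ 1 ≤ dist (b i) γ := by
    rintro γ hγ i
    rcases hγ with rfl | rfl <;> rcases hb i with h | h <;> simp [h]
  rw [hA0.numRange_eq_ball, hA1.numRange_eq_Ioo]
  exact (hAb.numRange_subset_convexHull hb).antisymm <| hAb.convexHull_subset_numRange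
    (hasArbitrarilyLongRuns_of_const_mem_closure (hsep 0 (.inl rfl)) h0)
    (hasArbitrarilyLongRuns_of_const_mem_closure (hsep 1 (.inr rfl)) h1)
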